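/- For w_t = t^γ with γ ≤ -1 and any integer r > 0, (-log Δ)^r w_t^# = O(t^{-1}(log t)^{r-1}) if γ < -1, and O(t^{-1}(log t)^r) if γ = -1, as t → ∞. -/

import Mathlib

/-- Coefficients of `-log(1-s) = Σ_{j≥1} s^j/j`. -/
noncomputable def harmCoef : ℕ → ℝ
  | 0 => 0
  | j + 1 => 1 / ((j : ℝ) + 1)

/-- Coefficient of `s^j` in `(-log(1-s))^r`, defined by `r`-fold convolution. -/
noncomputable def logCoef : ℕ → ℕ → ℝ
  | 0, 0 => 1
  | 0, _ + 1 => 0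
  | r + 1, j => ∑ k ∈ Finset.range (j + 1), harmCoef k * logCoef r (j - k)

/-! The coefficient bound `logCoef (r + 1) j ≤ 4 ^ r H_j ^ r / j` (`H_j` the harmonic
number) follows by induction from the convolution estimate
`∑_{k ≤ n} k⁻¹ (n - k) ^ γ ≤ (4 / n) ∑_{k ≤ n} k ^ γ` for `γ ≤ -1`, itself a termwise
consequence of `a⁻¹ b ^ γ ≤ 2 (a + b)⁻¹ (a ^ γ + b ^ γ)`. The same estimate bounds the sum
in the theorem by `4 ^ r t⁻¹ H_t ^ (r - 1) ∑_{k ≤ t} k ^ γ`; the last factor is bounded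
when `γ < -1` and equals `H_t` when `γ = -1`, and `H_t = O(log t)`. -/

open Finset Filter Asymptotics Real

lemma inv_mul_rpow_le_of_le_neg_one {a b γ : ℝ} (ha : 0 ≤ a) (hb : 0 ≤ b) (hγ : γ ≤ -1) :
    a⁻¹ * b ^ γ ≤ 2 * (a + b)⁻¹ * (a ^ γ + b ^ γ) := by
  have hγ0 : γ ≠ 0 := by linarith
  rcases ha.eq_or_lt with rfl | ha
  · simp only [inv_zero, zero_mul]; positivity
  rcases hb.eq_or_lt with rfl | hb
  · simp only [zero_rpow hγ0, mul_zero]; positivity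
  rcases le_total a b with hab | hba
  · -- `b ^ γ = b ^ (γ + 1) / b ≤ a ^ (γ + 1) / b` since `γ + 1 ≤ 0`
    have hpow : b ^ (γ + 1) ≤ a ^ (γ + 1) := rpow_le_rpow_of_nonpos ha hab (by linarith)
    rw [rpow_add hb, rpow_add ha, rpow_one, rpow_one] at hpow
    have h2 : b⁻¹ ≤ 2 * (a + b)⁻¹ := by
      rw [inv_le_comm₀ hb (by positivity), mul_inv, inv_inv]; linarith
    calc a⁻¹ * b ^ γ ≤ a ^ γ * b⁻¹ := by
          rw [inv_mul_le_iff₀ ha, ← mul_assoc, le_mul_inv_iff₀ hb]; linarith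
      _ ≤ 2 * (a + b)⁻¹ * a ^ γ := by rw [mul_comm]; gcongr
      _ ≤ 2 * (a + b)⁻¹ * (a ^ γ + b ^ γ) := by
          gcongr; exact le_add_of_nonneg_right (rpow_nonneg hb.le γ)
  · have h2 : a⁻¹ ≤ 2 * (a + b)⁻¹ := by
      rw [inv_le_comm₀ ha (by positivity), mul_inv, inv_inv]; linarith
    calc a⁻¹ * b ^ γ ≤ 2 * (a + b)⁻¹ * b ^ γ := by gcongr
      _ ≤ 2 * (a + b)⁻¹ * (a ^ γ + b ^ γ) := by
          gcongr; exact le_add_of_nonneg_left (rpow_nonneg ha.le γ)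

lemma sum_range_inv_mul_rpow_sub_le {γ : ℝ} (hγ : γ ≤ -1) (n : ℕ) :
    ∑ k ∈ range (n + 1), (k : ℝ)⁻¹ * ((n - k : ℕ) : ℝ) ^ γ ≤
      4 * (n : ℝ)⁻¹ * ∑ k ∈ range (n + 1), (k : ℝ) ^ γ := by
  have hreflect :
      ∑ k ∈ range (n + 1), ((n - k : ℕ) : ℝ) ^ γ = ∑ k ∈ range (n + 1), (k : ℝ) ^ γ := by
    simpa using sum_range_reflect (fun k => (k : ℝ) ^ γ) (n + 1)
  calc ∑ k ∈ range (n + 1), (k : ℝ)⁻¹ * ((n - k : ℕ) : ℝ) ^ γ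
      ≤ ∑ k ∈ range (n + 1), 2 * (n : ℝ)⁻¹ * ((k : ℝ) ^ γ + ((n - k : ℕ) : ℝ) ^ γ) := by
        refine sum_le_sum fun k hk => ?_
        have hsum : (k : ℝ) + ((n - k : ℕ) : ℝ) = n := by
          rw [Nat.cast_sub (Nat.lt_succ_iff.1 (mem_range.1 hk))]; ring
        simpa [hsum] using
          inv_mul_rpow_le_of_le_neg_one k.cast_nonneg (n - k).cast_nonneg hγ
    _ = 4 * (n : ℝ)⁻¹ * ∑ k ∈ range (n + 1), (k : ℝ) ^ γ := by
        rw [← mul_sum, sum_add_distrib, hreflect]; ring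

lemma sum_range_succ_inv_eq_harmonic (n : ℕ) :
    ∑ k ∈ range (n + 1), (k : ℝ)⁻¹ = harmonic n := by
  simp [sum_range_succ', harmonic]

lemma harmonic_mono : Monotone harmonic :=
  monotone_nat_of_le_succ fun n => by
    rw [harmonic_succ]; exact le_add_of_nonneg_right (by positivity)

lemma harmonic_nonneg (n : ℕ) : 0 ≤ harmonic n := by
  simpa using harmonic_mono n.zero_le

lemma isBigO_harmonic_log :
    (fun n : ℕ => (harmonic n : ℝ)) =O[atTop] fun n => Real.log n := by
  refine IsBigO.of_bound 2 ?_
  filter_upwards [(tendsto_log_atTop.comp tendsto_natCast_atTop_atTop).eventually_ge_atTop 1]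
    with n (hn : 1 ≤ Real.log n)
  rw [norm_of_nonneg (by exact_mod_cast harmonic_nonneg n), norm_of_nonneg (by linarith)]
  linarith [harmonic_le_one_add_log n]

lemma harmCoef_eq_inv (k : ℕ) : harmCoef k = (k : ℝ)⁻¹ := by
  cases k <;> simp [harmCoef]

lemma logCoef_succ (r j : ℕ) :
    logCoef (r + 1) j = ∑ k ∈ range (j + 1), (k : ℝ)⁻¹ * logCoef r (j - k) := by
  simp only [logCoef, harmCoef_eq_inv]

lemma logCoef_nonneg (r j : ℕ) : 0 ≤ logCoef r j := by
  induction r generalizing j with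
  | zero => cases j <;> simp [logCoef]
  | succ r ih =>
    rw [logCoef_succ]; exact sum_nonneg fun k _ => mul_nonneg (by positivity) (ih _)

lemma logCoef_one (j : ℕ) : logCoef 1 j = (j : ℝ)⁻¹ := by
  rw [logCoef_succ, sum_eq_single_of_mem j (self_mem_range_succ j)]
  · simp [logCoef]
  · intro k hk hkj
    obtain ⟨m, hm⟩ :=
      Nat.exists_eq_add_of_lt (lt_of_le_of_ne (Nat.lt_succ_iff.1 (mem_range.1 hk)) hkj)
    simp [hm, Nat.add_assoc, logCoef]

lemma logCoef_succ_le (r j : ℕ) :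
    logCoef (r + 1) j ≤ 4 ^ r * harmonic j ^ r * (j : ℝ)⁻¹ := by
  induction r generalizing j with
  | zero => simp [logCoef_one]
  | succ r ih =>
    calc logCoef (r + 1 + 1) j
        = ∑ k ∈ range (j + 1), (k : ℝ)⁻¹ * logCoef (r + 1) (j - k) := logCoef_succ _ _
      _ ≤ ∑ k ∈ range (j + 1), (k : ℝ)⁻¹ * (4 ^ r * harmonic j ^ r * ((j - k : ℕ) : ℝ)⁻¹) := by
          refine sum_le_sum fun k _ =>
            mul_le_mul_of_nonneg_left ((ih _).trans ?_) (by positivity)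
          have := harmonic_nonneg (j - k)
          gcongr
          exact harmonic_mono (Nat.sub_le j k)
      _ = 4 ^ r * harmonic j ^ r *
            ∑ k ∈ range (j + 1), (k : ℝ)⁻¹ * ((j - k : ℕ) : ℝ) ^ (-1 : ℝ) := by
          simp only [mul_sum, rpow_neg_one]
          exact sum_congr rfl fun k _ => by ring
      _ ≤ 4 ^ r * harmonic j ^ r *
            (4 * (j : ℝ)⁻¹ * ∑ k ∈ range (j + 1), (k : ℝ) ^ (-1 : ℝ)) := by
          have := harmonic_nonneg j
          gcongr
          exact sum_range_inv_mul_rpow_sub_le le_rfl j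
      _ = 4 ^ (r + 1) * harmonic j ^ (r + 1) * (j : ℝ)⁻¹ := by
          simp only [rpow_neg_one, sum_range_succ_inv_eq_harmonic]; ring

lemma sum_logCoef_mul_rpow_le {γ : ℝ} (hγ : γ ≤ -1) (r t : ℕ) :
    ∑ j ∈ range t, logCoef (r + 1) j * ((t : ℝ) - j) ^ γ ≤
      4 ^ (r + 1) * ((t : ℝ)⁻¹ * harmonic t ^ r * ∑ k ∈ range (t + 1), (k : ℝ) ^ γ) := by
  have hH := harmonic_nonneg t
  calc ∑ j ∈ range t, logCoef (r + 1) j * ((t : ℝ) - j) ^ γ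
      = ∑ j ∈ range (t + 1), logCoef (r + 1) j * ((t - j : ℕ) : ℝ) ^ γ := by
        rw [sum_range_succ, Nat.sub_self, Nat.cast_zero, zero_rpow (by linarith), mul_zero,
          add_zero]
        exact sum_congr rfl fun j hj => by rw [Nat.cast_sub (mem_range.1 hj).le]
    _ ≤ ∑ j ∈ range (t + 1),
          4 ^ r * harmonic t ^ r * ((j : ℝ)⁻¹ * ((t - j : ℕ) : ℝ) ^ γ) := by
        refine sum_le_sum fun j hj => ?_
        have := harmonic_nonneg j
        have hjt := harmonic_mono (Nat.lt_succ_iff.1 (mem_range.1 hj))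
        calc logCoef (r + 1) j * ((t - j : ℕ) : ℝ) ^ γ
            ≤ 4 ^ r * harmonic j ^ r * (j : ℝ)⁻¹ * ((t - j : ℕ) : ℝ) ^ γ := by
              gcongr; exact logCoef_succ_le r j
          _ ≤ 4 ^ r * harmonic t ^ r * ((j : ℝ)⁻¹ * ((t - j : ℕ) : ℝ) ^ γ) := by
              rw [← mul_assoc]; gcongr
    _ ≤ 4 ^ r * harmonic t ^ r * (4 * (t : ℝ)⁻¹ * ∑ k ∈ range (t + 1), (k : ℝ) ^ γ) := by
        rw [← mul_sum]; gcongr; exact sum_range_inv_mul_rpow_sub_le hγ t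
    _ = 4 ^ (r + 1) * ((t : ℝ)⁻¹ * harmonic t ^ r * ∑ k ∈ range (t + 1), (k : ℝ) ^ γ) := by
        ring

lemma isBigO_sum_logCoef_mul_rpow {γ : ℝ} (hγ : γ ≤ -1) (r : ℕ) :
    (fun t : ℕ => ∑ j ∈ range t, logCoef (r + 1) j * ((t : ℝ) - j) ^ γ) =O[atTop]
      fun t => (t : ℝ)⁻¹ * harmonic t ^ r * ∑ k ∈ range (t + 1), (k : ℝ) ^ γ := by
  refine isBigO_of_le' _ (c := 4 ^ (r + 1)) fun t => ?_
  have hsum_nonneg : 0 ≤ ∑ j ∈ range t, logCoef (r + 1) j * ((t : ℝ) - j) ^ γ :=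
    sum_nonneg fun j hj => mul_nonneg (logCoef_nonneg _ _)
      (rpow_nonneg (sub_nonneg.2 (by exact_mod_cast (mem_range.1 hj).le)) _)
  have := harmonic_nonneg t
  rw [norm_of_nonneg hsum_nonneg, norm_of_nonneg (by positivity)]
  exact sum_logCoef_mul_rpow_le hγ r t

open Filter in
theorem stmt5 (γ : ℝ) (hγ : γ ≤ -1) (r : ℕ) (hr : 0 < r) :
    (fun t : ℕ => ∑ j ∈ Finset.range t, logCoef r j * ((t : ℝ) - j) ^ γ)
      =O[atTop]
    (fun t : ℕ => (t : ℝ)⁻¹ * Real.log t ^ (if γ < -1 then r - 1 else r)) := by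
  obtain ⟨r, rfl⟩ : ∃ s, r = s + 1 := ⟨r - 1, by omega⟩
  refine (isBigO_sum_logCoef_mul_rpow hγ r).trans ?_
  split_ifs with hγlt
  · have hS :
        (fun t : ℕ => ∑ k ∈ range (t + 1), (k : ℝ) ^ γ) =O[atTop] fun _ => (1 : ℝ) := by
      refine isBigO_of_le' _ (c := ∑' k : ℕ, (k : ℝ) ^ γ) fun t => ?_
      have hterm : ∀ k : ℕ, 0 ≤ (k : ℝ) ^ γ := fun k => rpow_nonneg k.cast_nonneg γ
      rw [norm_of_nonneg (sum_nonneg fun k _ => hterm k), norm_one, mul_one]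
      exact (summable_nat_rpow.2 hγlt).sum_le_tsum _ fun k _ => hterm k
    simpa using ((isBigO_refl (fun t : ℕ => (t : ℝ)⁻¹) atTop).mul
      (isBigO_harmonic_log.pow r)).mul hS
  · obtain rfl : γ = -1 := le_antisymm hγ (not_lt.1 hγlt)
    simp only [rpow_neg_one, sum_range_succ_inv_eq_harmonic, mul_assoc, ← pow_succ]
    exact (isBigO_refl _ _).mul (isBigO_harmonic_log.pow _)
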